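/- Let n ≥ 1 and α ∈ (0,1). There is a constant C = C(n,α) > 0 with the following property: for every locally integrable f : ℝⁿ → ℂ with ‖f‖_{𝓛_{2,n−2α}} < ∞, every x₀ ∈ ℝⁿ, every r > 0, every t > 0, and every y ∈ B(x₀,r), ∫_{ℝⁿ∖B(x₀,2r)} t |f(z) − f_{B(x₀,2r)}| / (t + |y−z|)^{n+1} dz ≤ C t r^{−(1+α)} ‖f‖_{𝓛_{2,n−2α}}, where f_{B(x₀,2r)} denotes the average of f over the ball B(x₀,2r). -/

import Mathlib

open MeasureTheory Metric Real
open scoped ENNReal NNReal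

noncomputable section

/-- The Campanato norm `‖f‖_{𝓛_{2,n−2α}}`. -/
def CampanatoNorm (n : ℕ) (α : ℝ) (f : EuclideanSpace ℝ (Fin n) → ℂ) : ℝ≥0∞ :=
  ⨆ (r : ℝ) (_ : 0 < r) (x : EuclideanSpace ℝ (Fin n)),
    (ENNReal.ofReal (r ^ (2 * (α - (n : ℝ)))) *
      ∫⁻ y in Metric.ball x r, ∫⁻ z in Metric.ball x r,
        (‖f y - f z‖₊ : ℝ≥0∞) ^ 2) ^ (1 / 2 : ℝ)

/-! Cover the complement of `B(x₀, 2r)` by the balls `B(x₀, 2^(k+1)·2r)`: on the `k`-th dyadic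
shell the kernel is at most `t (2^k r)^{-(n+1)}`. By Cauchy–Schwarz the mean oscillation of `f`
over a ball of radius `R` is at most `R^{n-α} ‖f‖`; telescoping the averages over the balls
`B(x₀, 2^j·2r)`, a geometric series because `α > 0`, then bounds
`∫_{B(x₀, 2^(k+1)·2r)} |f - f_{2B}|` by a multiple of `2^{kn} r^{n-α} ‖f‖`, so the shell
contributions decay like `2^{-k}`. -/

section Oscillation

variable {X E : Type*} [MeasurableSpace X] {μ : Measure X} [NormedAddCommGroup E] {f : X → E}
  {s : Set X}

theorem lintegral_le_measure_univ_rpow_mul {h : X → ℝ≥0∞} (hh : AEMeasurable h μ) :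
    ∫⁻ x, h x ∂μ ≤ μ Set.univ ^ (1 / 2 : ℝ) * (∫⁻ x, h x ^ 2 ∂μ) ^ (1 / 2 : ℝ) := by
  simpa using ENNReal.lintegral_mul_le_Lp_mul_Lq μ Real.HolderConjugate.two_two
    (aemeasurable_const (b := 1)) hh

theorem lintegral_lintegral_enorm_sub_le [SFinite μ] (hf : AEStronglyMeasurable f μ) :
    ∫⁻ x, ∫⁻ y, ‖f x - f y‖ₑ ∂μ ∂μ ≤
      μ Set.univ * (∫⁻ x, ∫⁻ y, ‖f x - f y‖ₑ ^ 2 ∂μ ∂μ) ^ (1 / 2 : ℝ) := by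
  have hdiff : AEMeasurable (fun p : X × X => ‖f p.1 - f p.2‖ₑ) (μ.prod μ) :=
    ((hf.comp_quasiMeasurePreserving Measure.quasiMeasurePreserving_fst).sub
      (hf.comp_quasiMeasurePreserving Measure.quasiMeasurePreserving_snd)).enorm
  have hroot : (μ.prod μ Set.univ) ^ (1 / 2 : ℝ) = μ Set.univ := by
    rw [← Set.univ_prod_univ, Measure.prod_prod, ← sq, one_div]
    exact_mod_cast ENNReal.pow_rpow_inv_natCast two_ne_zero _
  rw [lintegral_lintegral hdiff, lintegral_lintegral (hdiff.pow_const 2), ← hroot]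
  exact lintegral_le_measure_univ_rpow_mul hdiff

theorem measure_mul_enorm_sub_setAverage_le [NormedSpace ℝ E] [CompleteSpace E] (hs : μ s ≠ ∞)
    (hf : IntegrableOn f s μ) (c : E) :
    μ s * ‖c - ⨍ x in s, f x ∂μ‖ₑ ≤ ∫⁻ x in s, ‖c - f x‖ₑ ∂μ := by
  have hc : IntegrableOn (fun _ => c) s μ := integrableOn_const hs
  calc μ s * ‖c - ⨍ x in s, f x ∂μ‖ₑ = ‖μ.real s • (c - ⨍ x in s, f x ∂μ)‖ₑ := by
        rw [enorm_smul, Real.enorm_of_nonneg measureReal_nonneg, measureReal_def,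
          ENNReal.ofReal_toReal hs]
    _ = ‖∫ x in s, (c - f x) ∂μ‖ₑ := by
        rw [smul_sub, measure_smul_setAverage _ hs, integral_sub hc hf, setIntegral_const]
    _ ≤ ∫⁻ x in s, ‖c - f x‖ₑ ∂μ := enorm_integral_le_lintegral_enorm _

theorem setLIntegral_enorm_sub_setAverage_le [NormedSpace ℝ E] [CompleteSpace E] [SFinite μ]
    (hs₀ : μ s ≠ 0) (hs : μ s ≠ ∞) (hf : IntegrableOn f s μ) :
    ∫⁻ x in s, ‖f x - ⨍ y in s, f y ∂μ‖ₑ ∂μ ≤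
      (∫⁻ x in s, ∫⁻ y in s, ‖f x - f y‖ₑ ^ 2 ∂μ ∂μ) ^ (1 / 2 : ℝ) := by
  rw [← ENNReal.mul_le_mul_iff_right hs₀ hs, ← lintegral_const_mul' _ _ hs]
  calc ∫⁻ x in s, μ s * ‖f x - ⨍ y in s, f y ∂μ‖ₑ ∂μ
      ≤ ∫⁻ x in s, ∫⁻ y in s, ‖f x - f y‖ₑ ∂μ ∂μ :=
        lintegral_mono fun x => measure_mul_enorm_sub_setAverage_le hs hf (f x)
    _ ≤ μ s * (∫⁻ x in s, ∫⁻ y in s, ‖f x - f y‖ₑ ^ 2 ∂μ ∂μ) ^ (1 / 2 : ℝ) := by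
        simpa using
          lintegral_lintegral_enorm_sub_le (μ := μ.restrict s) hf.aestronglyMeasurable

end Oscillation

theorem exists_dyadic_shell {X : Type*} [PseudoMetricSpace X] {x z : X} {ρ : ℝ} (hρ : 0 < ρ)
    (hz : z ∉ ball x ρ) : ∃ k : ℕ, 2 ^ k * ρ ≤ dist z x ∧ z ∈ ball x (2 ^ (k + 1) * ρ) := by
  have h1 : 1 ≤ dist z x / ρ := by
    rw [one_le_div hρ]; simpa [mem_ball] using hz
  obtain ⟨k, hk, hk'⟩ := exists_nat_pow_near h1 one_lt_two
  exact ⟨k, (le_div_iff₀ hρ).1 hk, mem_ball.2 ((div_lt_iff₀ hρ).1 hk')⟩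

section Kernel

variable {E : Type*} [NormedAddCommGroup E] {x y z : E} {r t : ℝ}

theorem div_add_norm_sub_pow_le (m : ℕ) (hr : 0 < r) (ht : 0 ≤ t) (hy : y ∈ ball x r) {k : ℕ}
    (hz : 2 ^ k * (2 * r) ≤ dist z x) : t / (t + ‖y - z‖) ^ m ≤ t / (2 ^ k * r) ^ m := by
  have hyz : 2 ^ k * r ≤ ‖y - z‖ := by
    have h1 : (1 : ℝ) ≤ 2 ^ k := one_le_pow₀ one_le_two
    have := dist_triangle z y x
    rw [dist_comm z y, dist_eq_norm y z] at this
    rw [mem_ball] at hy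
    nlinarith
  gcongr
  linarith

variable [MeasurableSpace E] [OpensMeasurableSpace E]

theorem setLIntegral_compl_ball_le_tsum (μ : Measure E) (m : ℕ) (hr : 0 < r) (ht : 0 ≤ t)
    (hy : y ∈ ball x r) {h : E → ℝ≥0∞} (hh : AEMeasurable h μ) :
    ∫⁻ z in (ball x (2 * r))ᶜ, ENNReal.ofReal (t / (t + ‖y - z‖) ^ m) * h z ∂μ ≤
      ∑' k : ℕ, ENNReal.ofReal (t / (2 ^ k * r) ^ m) *
        ∫⁻ z in ball x (2 ^ (k + 1) * (2 * r)), h z ∂μ := by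
  have hdom : ∀ z ∈ (ball x (2 * r))ᶜ, ENNReal.ofReal (t / (t + ‖y - z‖) ^ m) * h z ≤
      ∑' k : ℕ, (ball x (2 ^ (k + 1) * (2 * r))).indicator
        (fun z => ENNReal.ofReal (t / (2 ^ k * r) ^ m) * h z) z := by
    intro z hz
    obtain ⟨k, hk, hkz⟩ := exists_dyadic_shell (by positivity) hz
    refine le_trans ?_ (ENNReal.le_tsum k)
    rw [Set.indicator_of_mem hkz]
    gcongr ENNReal.ofReal ?_ * _
    exact div_add_norm_sub_pow_le m hr ht hy hk
  calc ∫⁻ z in (ball x (2 * r))ᶜ, ENNReal.ofReal (t / (t + ‖y - z‖) ^ m) * h z ∂μ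
      ≤ ∫⁻ z in (ball x (2 * r))ᶜ, ∑' k : ℕ, (ball x (2 ^ (k + 1) * (2 * r))).indicator
          (fun z => ENNReal.ofReal (t / (2 ^ k * r) ^ m) * h z) z ∂μ :=
        setLIntegral_mono' measurableSet_ball.compl hdom
    _ ≤ ∫⁻ z, ∑' k : ℕ, (ball x (2 ^ (k + 1) * (2 * r))).indicator
          (fun z => ENNReal.ofReal (t / (2 ^ k * r) ^ m) * h z) z ∂μ :=
        setLIntegral_le_lintegral _ _
    _ = _ := by
        rw [lintegral_tsum fun k => (hh.const_mul _).indicator measurableSet_ball]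
        simp_rw [lintegral_indicator measurableSet_ball]
        congr 1 with k
        exact lintegral_const_mul' _ _ ENNReal.ofReal_ne_top

end Kernel

theorem two_rpow_neg_lt_one {α : ℝ} (hα : 0 < α) : (2 : ℝ) ^ (-α) < 1 :=
  Real.rpow_lt_one_of_one_lt_of_neg one_lt_two (neg_lt_zero.2 hα)

theorem geom_sum_two_rpow_neg_le {α : ℝ} (hα : 0 < α) (k : ℕ) :
    ∑ j ∈ Finset.range k, ((2 : ℝ) ^ (-α)) ^ j ≤ 1 / (1 - 2 ^ (-α)) := by
  simpa using geom_sum_Ico_le_of_lt_one (m := 0) (n := k) (by positivity) (two_rpow_neg_lt_one hα)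

def averageChainConst (n : ℕ) (α : ℝ) : ℝ := 2 ^ ((n : ℝ) - α) / (1 - 2 ^ (-α))

theorem averageChainConst_nonneg (n : ℕ) {α : ℝ} (hα : 0 < α) : 0 ≤ averageChainConst n α :=
  div_nonneg (by positivity) (sub_pos.2 (two_rpow_neg_lt_one hα)).le

theorem dyadic_tail_coeff_le (n k : ℕ) {α r t A : ℝ} (hα : 0 ≤ α) (hr : 0 < r) (ht : 0 ≤ t)
    (hA : 0 ≤ A) :
    t / (2 ^ k * r) ^ (n + 1) * ((2 ^ (k + 1) * (2 * r)) ^ n * (A * (2 * r) ^ (-α))) ≤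
      2 ^ (2 * n) * A * t * r ^ (-(1 + α)) * 2⁻¹ ^ k := by
  have hdecay : (2 * r) ^ (-α) ≤ r ^ (-α) :=
    Real.rpow_le_rpow_of_nonpos hr (by linarith) (by linarith)
  calc t / (2 ^ k * r) ^ (n + 1) * ((2 ^ (k + 1) * (2 * r)) ^ n * (A * (2 * r) ^ (-α)))
      ≤ t / (2 ^ k * r) ^ (n + 1) * ((2 ^ (k + 1) * (2 * r)) ^ n * (A * r ^ (-α))) := by
        gcongr
    _ = 2 ^ (2 * n) * A * t * r ^ (-(1 + α)) * 2⁻¹ ^ k := by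
        rw [neg_add, Real.rpow_add hr, Real.rpow_neg_one, pow_mul, inv_pow]
        field_simp
        ring

section Campanato

variable {n : ℕ} {α : ℝ} {f : EuclideanSpace ℝ (Fin n) → ℂ}

theorem lintegral_ball_sq_rpow_le_campanatoNorm (x : EuclideanSpace ℝ (Fin n)) {R : ℝ}
    (hR : 0 < R) :
    (∫⁻ y in ball x R, ∫⁻ z in ball x R, ‖f y - f z‖ₑ ^ 2) ^ (1 / 2 : ℝ) ≤
      ENNReal.ofReal (R ^ ((n : ℝ) - α)) * CampanatoNorm n α f := by
  have hsup : ENNReal.ofReal (R ^ (α - n)) *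
      (∫⁻ y in ball x R, ∫⁻ z in ball x R, ‖f y - f z‖ₑ ^ 2) ^ (1 / 2 : ℝ) ≤
        CampanatoNorm n α f := by
    refine le_trans (le_of_eq ?_) (le_iSup₂_of_le R hR (le_iSup_of_le x le_rfl))
    rw [ENNReal.mul_rpow_of_nonneg _ _ (by norm_num), ENNReal.ofReal_rpow_of_pos (by positivity),
      ← Real.rpow_mul hR.le, show 2 * (α - n) * (1 / 2 : ℝ) = α - n by ring]
    -- `‖·‖ₑ` unfolds to the coerced `‖·‖₊` used in `CampanatoNorm`
    rfl
  have hcancel : ENNReal.ofReal (R ^ ((n : ℝ) - α)) * ENNReal.ofReal (R ^ (α - n)) = 1 := by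
    rw [← ENNReal.ofReal_mul (by positivity), ← Real.rpow_add hR]
    simp
  calc (∫⁻ y in ball x R, ∫⁻ z in ball x R, ‖f y - f z‖ₑ ^ 2) ^ (1 / 2 : ℝ)
      = ENNReal.ofReal (R ^ ((n : ℝ) - α)) * (ENNReal.ofReal (R ^ (α - n)) *
          (∫⁻ y in ball x R, ∫⁻ z in ball x R, ‖f y - f z‖ₑ ^ 2) ^ (1 / 2 : ℝ)) := by
        rw [← mul_assoc, hcancel, one_mul]
    _ ≤ _ := by gcongr

theorem volume_ball_eq_ofReal_pow_mul (x : EuclideanSpace ℝ (Fin n)) {R : ℝ} (hR : 0 < R) :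
    volume (ball x R) =
      ENNReal.ofReal (R ^ n) * volume (ball (0 : EuclideanSpace ℝ (Fin n)) 1) := by
  rw [Measure.addHaar_ball_of_pos _ _ hR, finrank_euclideanSpace_fin]

theorem setLIntegral_ball_enorm_sub_average_le (x : EuclideanSpace ℝ (Fin n)) {R : ℝ}
    (hR : 0 < R) (hf : IntegrableOn f (ball x R)) :
    ∫⁻ z in ball x R, ‖f z - ⨍ w in ball x R, f w‖ₑ ≤
      ENNReal.ofReal (R ^ ((n : ℝ) - α)) * CampanatoNorm n α f :=
  (setLIntegral_enorm_sub_setAverage_le (measure_ball_pos _ x hR).ne' measure_ball_lt_top.ne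
    hf).trans (lintegral_ball_sq_rpow_le_campanatoNorm x hR)

local notation "ω" => volume (ball (0 : EuclideanSpace ℝ (Fin n)) 1)

theorem edist_average_ball_two_mul_le (hf : LocallyIntegrable f) (x : EuclideanSpace ℝ (Fin n))
    {ρ : ℝ} (hρ : 0 < ρ) :
    ω * edist (⨍ w in ball x (2 * ρ), f w) (⨍ w in ball x ρ, f w) ≤
      ENNReal.ofReal (2 ^ ((n : ℝ) - α) * ρ ^ (-α)) * CampanatoNorm n α f := by
  have hint : IntegrableOn f (ball x (2 * ρ)) :=
    (hf.integrableOn_isCompact (isCompact_closedBall x _)).mono_set ball_subset_closedBall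
  have hsub : ball x ρ ⊆ ball x (2 * ρ) := ball_subset_ball (by linarith)
  refine (ENNReal.mul_le_mul_iff_right (by positivity : ENNReal.ofReal (ρ ^ n) ≠ 0)
    ENNReal.ofReal_ne_top).1 ?_
  calc ENNReal.ofReal (ρ ^ n) * (ω * edist (⨍ w in ball x (2 * ρ), f w) (⨍ w in ball x ρ, f w))
      = volume (ball x ρ) * ‖(⨍ w in ball x (2 * ρ), f w) - ⨍ w in ball x ρ, f w‖ₑ := by
        rw [volume_ball_eq_ofReal_pow_mul x hρ, mul_assoc, edist_eq_enorm_sub]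
    _ ≤ ∫⁻ z in ball x ρ, ‖(⨍ w in ball x (2 * ρ), f w) - f z‖ₑ :=
        measure_mul_enorm_sub_setAverage_le measure_ball_lt_top.ne (hint.mono_set hsub) _
    _ ≤ ∫⁻ z in ball x (2 * ρ), ‖f z - ⨍ w in ball x (2 * ρ), f w‖ₑ := by
        simp_rw [enorm_sub_rev _ (f _)]
        exact lintegral_mono_set hsub
    _ ≤ ENNReal.ofReal ((2 * ρ) ^ ((n : ℝ) - α)) * CampanatoNorm n α f :=
        setLIntegral_ball_enorm_sub_average_le x (by positivity) hint
    _ = ENNReal.ofReal (ρ ^ n) *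
          (ENNReal.ofReal (2 ^ ((n : ℝ) - α) * ρ ^ (-α)) * CampanatoNorm n α f) := by
        rw [← mul_assoc, ← ENNReal.ofReal_mul (by positivity), Real.mul_rpow zero_le_two hρ.le,
          Real.rpow_sub hρ, Real.rpow_neg hρ.le, Real.rpow_natCast]
        congr 2
        field_simp

theorem edist_average_ball_pow_two_mul_le (hα : 0 < α) (hf : LocallyIntegrable f)
    (x : EuclideanSpace ℝ (Fin n)) {R : ℝ} (hR : 0 < R) (k : ℕ) :
    ω * edist (⨍ w in ball x (2 ^ k * R), f w) (⨍ w in ball x R, f w) ≤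
      ENNReal.ofReal (averageChainConst n α * R ^ (-α)) * CampanatoNorm n α f := by
  set c : ℕ → ℂ := fun j => ⨍ w in ball x (2 ^ j * R), f w
  set a : ℕ → ℝ := fun j => 2 ^ ((n : ℝ) - α) * R ^ (-α) * ((2 : ℝ) ^ (-α)) ^ j with ha
  have hstep : ∀ j, ω * edist (c j) (c (j + 1)) ≤ ENNReal.ofReal (a j) * CampanatoNorm n α f := by
    intro j
    have h := edist_average_ball_two_mul_le (α := α) hf x (by positivity : 0 < 2 ^ j * R)
    rw [show 2 * (2 ^ j * R) = (2 : ℝ) ^ (j + 1) * R by ring] at h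
    rw [edist_comm]
    refine h.trans (le_of_eq ?_)
    rw [ha, Real.mul_rpow (by positivity) hR.le, ← Real.rpow_pow_comm zero_le_two]
    ring_nf
  have hsum : ∑ j ∈ Finset.range k, a j ≤ averageChainConst n α * R ^ (-α) :=
    calc ∑ j ∈ Finset.range k, a j
        = 2 ^ ((n : ℝ) - α) * R ^ (-α) * ∑ j ∈ Finset.range k, ((2 : ℝ) ^ (-α)) ^ j := by
          rw [Finset.mul_sum]
      _ ≤ 2 ^ ((n : ℝ) - α) * R ^ (-α) * (1 / (1 - 2 ^ (-α))) := by
          gcongr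
          exact geom_sum_two_rpow_neg_le hα k
      _ = averageChainConst n α * R ^ (-α) := by rw [averageChainConst]; ring
  suffices ω * edist (c k) (c 0) ≤
      ENNReal.ofReal (averageChainConst n α * R ^ (-α)) * CampanatoNorm n α f by
    simpa [c] using this
  calc ω * edist (c k) (c 0) = ω * edist (c 0) (c k) := by rw [edist_comm]
    _ ≤ ω * ∑ j ∈ Finset.range k, edist (c j) (c (j + 1)) := by
        gcongr
        exact edist_le_range_sum_edist c k
    _ ≤ ∑ j ∈ Finset.range k, ENNReal.ofReal (a j) * CampanatoNorm n α f := by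
        rw [Finset.mul_sum]
        exact Finset.sum_le_sum fun j _ => hstep j
    _ ≤ _ := by
        rw [← Finset.sum_mul, ← ENNReal.ofReal_sum_of_nonneg fun j _ => by positivity]
        gcongr

theorem setLIntegral_ball_pow_two_mul_enorm_sub_average_le (hα : 0 < α)
    (hf : LocallyIntegrable f) (x : EuclideanSpace ℝ (Fin n)) {R : ℝ} (hR : 0 < R) (k : ℕ) :
    ∫⁻ z in ball x (2 ^ k * R), ‖f z - ⨍ w in ball x R, f w‖ₑ ≤
      ENNReal.ofReal ((2 ^ k * R) ^ n * ((1 + averageChainConst n α) * R ^ (-α))) *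
        CampanatoNorm n α f := by
  set ρ := 2 ^ k * R
  have hρ : 0 < ρ := by positivity
  have hint : IntegrableOn f (ball x ρ) :=
    (hf.integrableOn_isCompact (isCompact_closedBall x _)).mono_set ball_subset_closedBall
  have hK := averageChainConst_nonneg n hα
  have hdecay : ρ ^ ((n : ℝ) - α) ≤ ρ ^ n * R ^ (-α) := by
    rw [Real.rpow_sub hρ, Real.rpow_natCast, div_eq_mul_inv, ← Real.rpow_neg hρ.le]
    refine mul_le_mul_of_nonneg_left ?_ (by positivity)
    exact Real.rpow_le_rpow_of_nonpos hR (le_mul_of_one_le_left hR.le (one_le_pow₀ one_le_two))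
      (by linarith)
  calc ∫⁻ z in ball x ρ, ‖f z - ⨍ w in ball x R, f w‖ₑ
      ≤ ∫⁻ z in ball x ρ, (‖f z - ⨍ w in ball x ρ, f w‖ₑ +
          ‖(⨍ w in ball x ρ, f w) - ⨍ w in ball x R, f w‖ₑ) :=
        lintegral_mono fun z => by
          simpa only [edist_eq_enorm_sub] using edist_triangle (f z) (⨍ w in ball x ρ, f w) _
    _ = (∫⁻ z in ball x ρ, ‖f z - ⨍ w in ball x ρ, f w‖ₑ) +
          ENNReal.ofReal (ρ ^ n) * (ω * edist (⨍ w in ball x ρ, f w) (⨍ w in ball x R, f w)) := by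
        rw [lintegral_add_right _ measurable_const, setLIntegral_const,
          volume_ball_eq_ofReal_pow_mul x hρ, edist_eq_enorm_sub]
        ring
    _ ≤ ENNReal.ofReal (ρ ^ ((n : ℝ) - α)) * CampanatoNorm n α f + ENNReal.ofReal (ρ ^ n) *
          (ENNReal.ofReal (averageChainConst n α * R ^ (-α)) * CampanatoNorm n α f) := by
        gcongr ?_ + ENNReal.ofReal (ρ ^ n) * ?_
        · exact setLIntegral_ball_enorm_sub_average_le x hρ hint
        · exact edist_average_ball_pow_two_mul_le hα hf x hR k
    _ ≤ _ := by
        rw [← mul_assoc, ← ENNReal.ofReal_mul (by positivity), ← add_mul,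
          ← ENNReal.ofReal_add (by positivity) (by positivity)]
        gcongr
        nlinarith

theorem ofReal_div_pow_mul_setLIntegral_ball_le (hα : 0 < α) (hf : LocallyIntegrable f)
    (x : EuclideanSpace ℝ (Fin n)) {r t : ℝ} (hr : 0 < r) (ht : 0 ≤ t) (k : ℕ) :
    ENNReal.ofReal (t / (2 ^ k * r) ^ (n + 1)) *
        ∫⁻ z in ball x (2 ^ (k + 1) * (2 * r)), ‖f z - ⨍ w in ball x (2 * r), f w‖ₑ ≤
      ENNReal.ofReal (2 ^ (2 * n) * (1 + averageChainConst n α) * t * r ^ (-(1 + α)) * 2⁻¹ ^ k) *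
        CampanatoNorm n α f := by
  have hK : 0 ≤ 1 + averageChainConst n α := by linarith [averageChainConst_nonneg n hα]
  calc _ ≤ ENNReal.ofReal (t / (2 ^ k * r) ^ (n + 1)) * (ENNReal.ofReal ((2 ^ (k + 1) * (2 * r)) ^ n
          * ((1 + averageChainConst n α) * (2 * r) ^ (-α))) * CampanatoNorm n α f) := by
        gcongr
        exact setLIntegral_ball_pow_two_mul_enorm_sub_average_le hα hf x (by positivity) (k + 1)
    _ ≤ _ := by
        rw [← mul_assoc, ← ENNReal.ofReal_mul (by positivity)]
        gcongr ENNReal.ofReal ?_ * _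
        exact dyadic_tail_coeff_le n k hα.le hr ht hK

end Campanato

theorem tsum_ofReal_mul_inv_two_pow {a : ℝ} (ha : 0 ≤ a) :
    ∑' k : ℕ, ENNReal.ofReal (a * 2⁻¹ ^ k) = ENNReal.ofReal (2 * a) := by
  rw [← ENNReal.ofReal_tsum_of_nonneg (fun k => by positivity)
    ((summable_geometric_of_lt_one (by norm_num) (by norm_num)).mul_left a), tsum_mul_left,
    tsum_geometric_inv_two, mul_comm]

theorem tail_estimate_general (n : ℕ) (α : ℝ) (hα0 : 0 < α) :
    ∃ C > (0 : ℝ), ∀ f : EuclideanSpace ℝ (Fin n) → ℂ,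
      LocallyIntegrable f volume →
      CampanatoNorm n α f ≠ ⊤ →
      ∀ (x₀ : EuclideanSpace ℝ (Fin n)), ∀ r > (0 : ℝ), ∀ t > (0 : ℝ),
        ∀ y ∈ Metric.ball x₀ r,
          ∫⁻ z in (Metric.ball x₀ (2 * r))ᶜ,
              ENNReal.ofReal (t / (t + ‖y - z‖) ^ (n + 1)) *
                (‖f z - ⨍ w in Metric.ball x₀ (2 * r), f w‖₊ : ℝ≥0∞) ≤
            ENNReal.ofReal (C * t * r ^ (-(1 + α))) * CampanatoNorm n α f := by
  set K := 1 + averageChainConst n α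
  have hK : 0 < K := by linarith [averageChainConst_nonneg n hα0]
  refine ⟨2 ^ (2 * n + 1) * K, by positivity, fun f hf _ x₀ r hr t ht y hy => ?_⟩
  set c := ⨍ w in ball x₀ (2 * r), f w
  have hmeas : AEMeasurable (fun z => ‖f z - c‖ₑ) :=
    (hf.aestronglyMeasurable.sub aestronglyMeasurable_const).enorm
  calc ∫⁻ z in (ball x₀ (2 * r))ᶜ, ENNReal.ofReal (t / (t + ‖y - z‖) ^ (n + 1)) * ‖f z - c‖ₑ
      ≤ ∑' k : ℕ, ENNReal.ofReal (t / (2 ^ k * r) ^ (n + 1)) *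
          ∫⁻ z in ball x₀ (2 ^ (k + 1) * (2 * r)), ‖f z - c‖ₑ :=
        setLIntegral_compl_ball_le_tsum volume (n + 1) hr ht.le hy hmeas
    _ ≤ ∑' k : ℕ, ENNReal.ofReal (2 ^ (2 * n) * K * t * r ^ (-(1 + α)) * 2⁻¹ ^ k) *
          CampanatoNorm n α f :=
        ENNReal.tsum_le_tsum fun k =>
          ofReal_div_pow_mul_setLIntegral_ball_le hα0 hf x₀ hr ht.le k
    _ = ENNReal.ofReal (2 ^ (2 * n + 1) * K * t * r ^ (-(1 + α))) * CampanatoNorm n α f := by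
        rw [ENNReal.tsum_mul_right, tsum_ofReal_mul_inv_two_pow (by positivity)]
        ring_nf

/-- Corrected tail estimate for the kernel `ψ_t`, applied to the far part
`f·1_{ℝⁿ∖2B}`: for `y ∈ B(x₀,r)`,
`∫_{ℝⁿ∖B(x₀,2r)} t|f(z)−f_{2B}|/(t+|y−z|)^{n+1} dz ≤ C t r^{−(1+α)} ‖f‖_{𝓛_{2,n−2α}}`. -/
theorem tail_estimate (n : ℕ) (hn : 1 ≤ n) (α : ℝ) (hα0 : 0 < α) (hα1 : α < 1) :
    ∃ C > (0 : ℝ), ∀ f : EuclideanSpace ℝ (Fin n) → ℂ,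
      LocallyIntegrable f volume →
      CampanatoNorm n α f ≠ ⊤ →
      ∀ (x₀ : EuclideanSpace ℝ (Fin n)), ∀ r > (0 : ℝ), ∀ t > (0 : ℝ),
        ∀ y ∈ Metric.ball x₀ r,
          ∫⁻ z in (Metric.ball x₀ (2 * r))ᶜ,
              ENNReal.ofReal (t / (t + ‖y - z‖) ^ (n + 1)) *
                (‖f z - ⨍ w in Metric.ball x₀ (2 * r), f w‖₊ : ℝ≥0∞) ≤
            ENNReal.ofReal (C * t * r ^ (-(1 + α))) * CampanatoNorm n α f :=
  tail_estimate_general n α hα0
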